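/- For every set X, the ring R_X is an integral domain, and it is Noetherian (even when X is infinite). -/

import Mathlib

/-- A multivariate integer polynomial is primitive if it is not divisible by any
integer `m > 1`. -/
def MvPrimitive {X : Type*} (q : MvPolynomial X ℤ) : Prop :=
  ∀ m : ℤ, 1 < m → ¬ (MvPolynomial.C m ∣ q)

/-- `ℚ(X)`, the field of fractions of `ℤ[X]`. -/
abbrev FracField (X : Type*) := FractionRing (MvPolynomial X ℤ)

/-- The set of elements `p / q` of `ℚ(X)` with `p, q ∈ ℤ[X]` polynomials in the
variables from `Z` and `q` primitive. -/
def Rset (X : Type*) (Z : Set X) : Set (FracField X) :=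
  {x | ∃ p q : MvPolynomial X ℤ,
      p ∈ MvPolynomial.supported ℤ Z ∧ q ∈ MvPolynomial.supported ℤ Z ∧
      MvPrimitive q ∧
      x = algebraMap (MvPolynomial X ℤ) (FracField X) p /
          algebraMap (MvPolynomial X ℤ) (FracField X) q}

/-- `R_Z` as a subring of `ℚ(X)`; since the set `Rset X Z` is closed under the ring
operations (by Gauss's lemma), this subring is exactly `Rset X Z`. -/
noncomputable def Rsub (X : Type*) (Z : Set X) : Subring (FracField X) :=
  Subring.closure (Rset X Z)

/-- `R⁺_Z`, the additive group of `R_Z`, as an additive subgroup of `ℚ(X)`;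
since the set `Rset X Z` is closed under addition and negation (by Gauss's lemma),
this additive subgroup is exactly `Rset X Z`. -/
noncomputable def Radd (X : Type*) (Z : Set X) : AddSubgroup (FracField X) :=
  AddSubgroup.closure (Rset X Z)

/-!
`R_X` is the localization of `ℤ[X]` at the primitive polynomials, a multiplicative set by
Gauss's lemma (checked modulo each prime `p`, where `(ℤ/p)[X]` is a domain). Pulling out the
gcd of the coefficients writes a nonzero numerator as `c * p₀` with `c ∈ ℤ` and `p₀` primitive,
and then `p₀ / q` is a unit; so every element of `R_X` is associated to an integer, and every
ideal is generated by the image of a generator of its preimage in `ℤ`.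
-/

open MvPolynomial

theorem IsPrincipalIdealRing.of_forall_associated_map {A R : Type*} [Semiring A]
    [IsPrincipalIdealRing A] [CommSemiring R] (f : A →+* R)
    (h : ∀ x : R, ∃ a, Associated (f a) x) : IsPrincipalIdealRing R := by
  refine ⟨fun I => ?_⟩
  have hI : (I.comap f).map f = I := by
    refine le_antisymm Ideal.map_comap_le fun x hx => ?_
    obtain ⟨a, u, rfl⟩ := h x
    have ha : f a ∈ I := by simpa using I.mul_mem_right (↑u⁻¹ : R) hx
    exact Ideal.mul_mem_right _ _ (Ideal.mem_map_of_mem f ha)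
  rw [← hI]
  exact (IsPrincipalIdealRing.principal _).map_ringHom f

section Primitive

variable {X : Type*}

theorem mvPrimitive_iff_map_zmod_ne_zero {q : MvPolynomial X ℤ} :
    MvPrimitive q ↔ ∀ p : ℕ, p.Prime → map (Int.castRingHom (ZMod p)) q ≠ 0 := by
  refine ⟨fun h p hp hq => h p (mod_cast hp.one_lt) ((C_dvd_iff_zmod p q).2 hq),
    fun h m hm hmq => ?_⟩
  obtain ⟨p, hp, hpm⟩ := Nat.exists_prime_and_dvd (n := m.natAbs) (by omega)
  exact h p hp ((C_dvd_iff_zmod p q).1 ((map_dvd C (Int.natCast_dvd.2 hpm)).trans hmq))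

theorem mvPrimitive_one : MvPrimitive (1 : MvPolynomial X ℤ) :=
  mvPrimitive_iff_map_zmod_ne_zero.2 fun p hp => by
    have := Fact.mk hp
    simp

theorem MvPrimitive.mul {q₁ q₂ : MvPolynomial X ℤ} (h₁ : MvPrimitive q₁)
    (h₂ : MvPrimitive q₂) : MvPrimitive (q₁ * q₂) := by
  rw [mvPrimitive_iff_map_zmod_ne_zero] at *
  intro p hp
  have := Fact.mk hp
  rw [map_mul]
  exact mul_ne_zero (h₁ p hp) (h₂ p hp)

theorem MvPrimitive.ne_zero {q : MvPolynomial X ℤ} (h : MvPrimitive q) : q ≠ 0 := by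
  rintro rfl
  exact h 2 one_lt_two (dvd_zero _)

theorem exists_eq_C_mul_mvPrimitive {p : MvPolynomial X ℤ} (hp : p ≠ 0) :
    ∃ (c : ℤ) (p₀ : MvPolynomial X ℤ), MvPrimitive p₀ ∧ p = C c * p₀ := by
  set c := p.support.gcd p.coeff
  have hc : c ≠ 0 := fun hc => hp <| by
    ext i
    by_contra hi
    exact hi (Finset.gcd_eq_zero_iff.1 hc i (mem_support_iff.2 hi))
  obtain ⟨p₀, hp₀⟩ : C c ∣ p := (C_dvd_iff_dvd_coeff _ _).2 fun i => by
    by_cases hi : p.coeff i = 0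
    · simp [hi]
    · exact Finset.gcd_dvd (mem_support_iff.2 hi)
  refine ⟨c, p₀, fun m hm ⟨r, hr⟩ => ?_, hp₀⟩
  have hcm : c * m ∣ c * 1 := by
    rw [mul_one]
    refine Finset.dvd_gcd fun i _ => (C_dvd_iff_dvd_coeff _ p).1 ⟨r, ?_⟩ i
    rw [hp₀, hr, map_mul, mul_assoc]
  have := Int.le_of_dvd one_pos ((mul_dvd_mul_iff_left hc).1 hcm)
  omega

variable (X) in
def primitiveSubmonoid : Submonoid (MvPolynomial X ℤ) where
  carrier := {q | MvPrimitive q}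
  one_mem' := mvPrimitive_one
  mul_mem' := MvPrimitive.mul

theorem primitiveSubmonoid_le_nonZeroDivisors :
    primitiveSubmonoid X ≤ nonZeroDivisors (MvPolynomial X ℤ) :=
  fun _ hq => mem_nonZeroDivisors_of_ne_zero (MvPrimitive.ne_zero hq)

theorem Rsub_univ_eq_ofField : Rsub X Set.univ = (Localization.subalgebra.ofField (FracField X)
    (primitiveSubmonoid X) primitiveSubmonoid_le_nonZeroDivisors).toSubring := by
  rw [Rsub, ← Subring.closure_eq (Subalgebra.toSubring _)]
  congr 1
  ext x
  simp only [Rset, supported_univ, Algebra.mem_top, true_and, div_eq_mul_inv,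
    Localization.subalgebra.ofField, exists_prop]
  rfl

end Primitive

theorem exists_associated_intCast_of_isLocalization_primitive {X R : Type*} [CommRing R]
    [Algebra (MvPolynomial X ℤ) R] [IsLocalization (primitiveSubmonoid X) R] (x : R) :
    ∃ n : ℤ, Associated (n : R) x := by
  obtain ⟨p, q, rfl⟩ := IsLocalization.exists_mk'_eq (primitiveSubmonoid X) x
  rcases eq_or_ne p 0 with rfl | hp
  · exact ⟨0, by simp⟩
  obtain ⟨c, p₀, hp₀, rfl⟩ := exists_eq_C_mul_mvPrimitive hp
  have hunit : IsUnit (IsLocalization.mk' R p₀ q) :=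
    .of_mul_eq_one _ (IsLocalization.mk'_mul_mk'_eq_one' p₀ q hp₀)
  have hc : algebraMap _ R (C c) = c := eq_intCast ((algebraMap (MvPolynomial X ℤ) R).comp C) c
  refine ⟨c, ?_⟩
  rw [← IsLocalization.mul_mk'_eq_mk'_of_mul, hc]
  exact associated_mul_unit_right _ _ hunit

theorem isPrincipalIdealRing_of_isLocalization_primitive (X R : Type*) [CommRing R]
    [Algebra (MvPolynomial X ℤ) R] [IsLocalization (primitiveSubmonoid X) R] :
    IsPrincipalIdealRing R :=
  .of_forall_associated_map (Int.castRingHom R) fun x => by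
    simpa using exists_associated_intCast_of_isLocalization_primitive (X := X) x

/-- For every set `X`, the ring `R_X` is an integral domain and is
Noetherian (even when `X` is infinite). -/
theorem Rsub_isDomain_isNoetherianRing (X : Type*) :
    IsDomain (Rsub X Set.univ) ∧ IsNoetherianRing (Rsub X Set.univ) := by
  refine ⟨inferInstance, ?_⟩
  rw [Rsub_univ_eq_ofField]
  have := isPrincipalIdealRing_of_isLocalization_primitive X (Localization.subalgebra.ofField
    (FracField X) (primitiveSubmonoid X) primitiveSubmonoid_le_nonZeroDivisors)
  exact PrincipalIdealRing.isNoetherianRing
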